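/- arXiv:1305.4028 — 3 statements merged into one kernel-verified Lean document; each statement's English description precedes it below -/
import Mathlib

section
/- The function B_ε(r) = (1/2)(f'(r)² + f(r)²/r²) + (1/(4ε²))(f(r)² − 1)² satisfies B_ε'(r) = −(2/ε²) f(r) f'(r)(1 − f(r)²) − (1/r)(f'(r) − f(r)/r)² for 0 < r < 1, whenever f solves the radial Ginzburg-Landau ODE −f'' − f'/r + f/r² = (1/ε²) f (1 − f²) on (0,1). -/
/-!
Differentiating `B_ε` produces a single second-order term `f' f''`. Substituting `f''` from the
ODE, the potential terms combine to `-(2/ε²) f f' (1 - f²)` and the remaining first-order terms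
`-f'²/r + 2 f f'/r² - f²/r³` are exactly `-(1/r) (f' - f/r)²`.
-/

open Set

section RadialEnergy

variable {f g : ℝ → ℝ} {f' g' r : ℝ}

theorem hasDerivAt_radial_gradient_energy (hf : HasDerivAt f f' r) (hg : HasDerivAt g g' r)
    (hr : r ≠ 0) :
    HasDerivAt (fun s => (1/2) * ((g s) ^ 2 + (f s) ^ 2 / s ^ 2))
      (g r * g' + f r * f' / r ^ 2 - (f r) ^ 2 / r ^ 3) r := by
  refine (((hg.fun_pow 2).fun_add ((hf.fun_pow 2).fun_div ((hasDerivAt_id' r).fun_pow 2)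
    (pow_ne_zero 2 hr))).const_mul (1/2)).congr_deriv ?_
  field_simp
  ring

theorem hasDerivAt_const_mul_double_well (c : ℝ) (hf : HasDerivAt f f' r) :
    HasDerivAt (fun s => c * ((f s) ^ 2 - 1) ^ 2) (4 * c * f r * f' * ((f r) ^ 2 - 1)) r := by
  refine ((((hf.fun_pow 2).sub_const 1).fun_pow 2).const_mul c).congr_deriv ?_
  norm_num
  ring

end RadialEnergy

theorem ContDiffOn.hasDerivAt_deriv_of_isOpen {f : ℝ → ℝ} {U : Set ℝ} {r : ℝ}
    (hf : ContDiffOn ℝ 2 f U) (hU : IsOpen U) (hr : r ∈ U) :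
    HasDerivAt (deriv f) (deriv (deriv f) r) r :=
  (((hf.deriv_of_isOpen hU (by norm_num : (1 : WithTop ℕ∞) + 1 ≤ 2)).differentiableOn
    one_ne_zero).differentiableAt (hU.mem_nhds hr)).hasDerivAt

theorem energy_density_derivative_general
    (ε : ℝ) (f : ℝ → ℝ)
    (hf : ContDiffOn ℝ 2 f (Ioo 0 1))
    (hode : ∀ r ∈ Ioo (0:ℝ) 1,
      -(deriv (deriv f) r) - deriv f r / r + f r / r ^ 2
        = (1 / ε ^ 2) * f r * (1 - (f r) ^ 2)) :
    ∀ r ∈ Ioo (0:ℝ) 1,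
      deriv (fun s => (1/2) * ((deriv f s) ^ 2 + (f s) ^ 2 / s ^ 2)
          + (1 / (4 * ε ^ 2)) * ((f s) ^ 2 - 1) ^ 2) r
        = -(2 / ε ^ 2) * f r * deriv f r * (1 - (f r) ^ 2)
          - (1 / r) * (deriv f r - f r / r) ^ 2 := by
  intro r hr
  have hr0 : r ≠ 0 := hr.1.ne'
  have hf₁ : HasDerivAt f (deriv f r) r :=
    ((hf.differentiableOn two_ne_zero).differentiableAt (isOpen_Ioo.mem_nhds hr)).hasDerivAt
  have hf₂ := hf.hasDerivAt_deriv_of_isOpen isOpen_Ioo hr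
  have hB := (hasDerivAt_radial_gradient_energy hf₁ hf₂ hr0).fun_add
    (hasDerivAt_const_mul_double_well (1 / (4 * ε ^ 2)) hf₁)
  rw [hB.deriv]
  have hf'' : deriv (deriv f) r
      = -deriv f r / r + f r / r ^ 2 - (1 / ε ^ 2) * f r * (1 - (f r) ^ 2) := by
    linear_combination -hode r hr
  rw [hf'']
  field_simp
  ring

theorem energy_density_derivative
    (ε : ℝ) (hε : 0 < ε) (f : ℝ → ℝ)
    (hf : ContDiffOn ℝ 2 f (Ioo 0 1))
    (hode : ∀ r ∈ Ioo (0:ℝ) 1,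
      -(deriv (deriv f) r) - deriv f r / r + f r / r ^ 2
        = (1 / ε ^ 2) * f r * (1 - (f r) ^ 2)) :
    ∀ r ∈ Ioo (0:ℝ) 1,
      deriv (fun s => (1/2) * ((deriv f s) ^ 2 + (f s) ^ 2 / s ^ 2)
          + (1 / (4 * ε ^ 2)) * ((f s) ^ 2 - 1) ^ 2) r
        = -(2 / ε ^ 2) * f r * deriv f r * (1 - (f r) ^ 2)
          - (1 / r) * (deriv f r - f r / r) ^ 2 :=
  energy_density_derivative_general ε f hf hode
end

section
/- Let f : (0,∞) → ℝ be defined by f(r) = f̃(r) for 0 < r ≤ 1 and f(r) = 1 for r > 1, where f̃ solves the radial Ginzburg-Landau ODE on (0,1) with f̃(1) = 1, 0 ≤ f̃ ≤ 1, f̃' > 0. Then the extended energy density B_ε(r) = (1/2)(f'(r)² + f(r)²/r²) + (1/(4ε²))(f(r)² − 1)², which equals 1/(2r²) for r > 1, is nonincreasing on (0,∞). -/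
/-!
On `(0,1)` the ODE turns the derivative of `B_ε` into
`-(1/r) (f' - f/r)² + (2/ε²) f f' (f² - 1)`, which is nonpositive because `f' ≥ 0` and
`0 ≤ f ≤ 1`. On `[1,∞)` the function is constant `1`, so `B_ε(r) = 1/(2r²)` (also at `r = 1`,
where `f'(1) = 0` whichever way `deriv` is read). The two pieces are glued at `r = 1` through
`B_ε ≥ f²/(2r²) → 1/2` as `r → 1⁻`.
-/

open Set Filter Topology

/-- The Ginzburg–Landau energy density `B_ε` of a radial profile `f`. -/
noncomputable def energyDensity (ε : ℝ) (f : ℝ → ℝ) (s : ℝ) : ℝ :=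
  (1/2) * ((deriv f s) ^ 2 + (f s) ^ 2 / s ^ 2) + (1 / (4 * ε ^ 2)) * ((f s) ^ 2 - 1) ^ 2

section EnergyDensity

variable {ε : ℝ} {f : ℝ → ℝ}

theorem half_sq_div_sq_le_energyDensity (s : ℝ) :
    (1/2) * ((f s) ^ 2 / s ^ 2) ≤ energyDensity ε f s := by
  unfold energyDensity
  nlinarith [sq_nonneg (deriv f s),
    show 0 ≤ 1 / (4 * ε ^ 2) * ((f s) ^ 2 - 1) ^ 2 by positivity]

theorem hasDerivAt_energyDensity {r : ℝ} (hr : r ≠ 0)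
    (hf : HasDerivAt f (deriv f r) r) (hf' : HasDerivAt (deriv f) (deriv (deriv f) r) r) :
    HasDerivAt (energyDensity ε f)
      (deriv f r * deriv (deriv f) r + f r * deriv f r / r ^ 2 - f r ^ 2 / r ^ 3
        + (1 / ε ^ 2) * f r * deriv f r * (f r ^ 2 - 1)) r := by
  have h := (((hf'.fun_pow 2).add ((hf.fun_pow 2).div (hasDerivAt_pow 2 r)
    (pow_ne_zero 2 hr))).const_mul (1/2)).add
    ((((hf.fun_pow 2).sub_const 1).fun_pow 2).const_mul (1 / (4 * ε ^ 2)))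
  refine h.congr_deriv ?_
  field_simp
  ring

/-- The sign of `B_ε'` along a solution of the radial ODE: `f'' = c`, `f' = b`, `f = a`. -/
theorem energyDensity_deriv_nonpos_of_ode {r a b c : ℝ} (hr : 0 < r) (ha₀ : 0 ≤ a) (ha₁ : a ≤ 1)
    (hb : 0 ≤ b) (hode : -c - b / r + a / r ^ 2 = (1 / ε ^ 2) * a * (1 - a ^ 2)) :
    b * c + a * b / r ^ 2 - a ^ 2 / r ^ 3 + (1 / ε ^ 2) * a * b * (a ^ 2 - 1) ≤ 0 := by
  have hc : c = -(b / r) + a / r ^ 2 - (1 / ε ^ 2) * a * (1 - a ^ 2) := by linarith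
  have hsplit : b * c + a * b / r ^ 2 - a ^ 2 / r ^ 3 + (1 / ε ^ 2) * a * b * (a ^ 2 - 1)
      = -((b - a / r) ^ 2 / r) + 2 * ((1 / ε ^ 2) * (a * b) * (a ^ 2 - 1)) := by
    rw [hc]
    field_simp
    ring
  have hdissip : 0 ≤ (b - a / r) ^ 2 / r := by positivity
  have hpotential : (1 / ε ^ 2) * (a * b) * (a ^ 2 - 1) ≤ 0 :=
    mul_nonpos_of_nonneg_of_nonpos (by positivity) (by nlinarith)
  linarith

theorem antitoneOn_energyDensity_of_ode {a b : ℝ} (ha : 0 ≤ a)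
    (hf : ContDiffOn ℝ 2 f (Ioo a b))
    (hbound : ∀ r ∈ Ioo a b, 0 ≤ f r ∧ f r ≤ 1)
    (hf' : ∀ r ∈ Ioo a b, 0 ≤ deriv f r)
    (hode : ∀ r ∈ Ioo a b,
      -(deriv (deriv f) r) - deriv f r / r + f r / r ^ 2
        = (1 / ε ^ 2) * f r * (1 - (f r) ^ 2)) :
    AntitoneOn (energyDensity ε f) (Ioo a b) := by
  have hf₁ : DifferentiableOn ℝ f (Ioo a b) := hf.differentiableOn two_ne_zero
  have hf₂ : DifferentiableOn ℝ (deriv f) (Ioo a b) :=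
    (hf.deriv_of_isOpen isOpen_Ioo (m := 1) (by norm_num)).differentiableOn one_ne_zero
  have hderiv (r : ℝ) (hr : r ∈ Ioo a b) :=
    hasDerivAt_energyDensity (ε := ε) (ha.trans_lt hr.1).ne'
      ((hf₁ r hr).differentiableAt (isOpen_Ioo.mem_nhds hr)).hasDerivAt
      ((hf₂ r hr).differentiableAt (isOpen_Ioo.mem_nhds hr)).hasDerivAt
  refine antitoneOn_of_deriv_nonpos (convex_Ioo a b)
    (fun r hr => (hderiv r hr).continuousAt.continuousWithinAt) ?_ ?_ <;> rw [interior_Ioo]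
  · exact fun r hr => (hderiv r hr).differentiableAt.differentiableWithinAt
  · intro r hr
    rw [(hderiv r hr).deriv]
    exact energyDensity_deriv_nonpos_of_ode (ha.trans_lt hr.1) (hbound r hr).1 (hbound r hr).2
      (hf' r hr) (hode r hr)

theorem deriv_eq_zero_of_eqOn_Ici {a c : ℝ} (h : EqOn f (fun _ => c) (Ici a)) :
    deriv f a = 0 := by
  by_cases hd : DifferentiableAt ℝ f a
  · rw [← hd.derivWithin (uniqueDiffOn_Ici a a self_mem_Ici),
      derivWithin_congr h (h self_mem_Ici), derivWithin_fun_const, Pi.zero_apply]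
  · exact deriv_zero_of_not_differentiableAt hd

theorem energyDensity_of_eqOn_one_Ici {r : ℝ} (h : EqOn f (fun _ => 1) (Ici r)) :
    energyDensity ε f r = 1 / (2 * r ^ 2) := by
  simp only [energyDensity, deriv_eq_zero_of_eqOn_Ici h, h self_mem_Ici]
  ring

theorem antitoneOn_energyDensity_of_eqOn_one_Ici {a : ℝ} (ha : 0 < a)
    (h : EqOn f (fun _ => 1) (Ici a)) : AntitoneOn (energyDensity ε f) (Ici a) := by
  intro x hx y hy hxy
  have hx₀ : 0 < x := ha.trans_le hx
  rw [energyDensity_of_eqOn_one_Ici (h.mono (Ici_subset_Ici.2 hx)),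
    energyDensity_of_eqOn_one_Ici (h.mono (Ici_subset_Ici.2 hy))]
  gcongr

end EnergyDensity

theorem AntitoneOn.Ioc_of_le_continuousWithinAt {g h : ℝ → ℝ} {a b : ℝ}
    (hg : AntitoneOn g (Ioo a b)) (hhg : ∀ x ∈ Ioo a b, h x ≤ g x) (hb : g b ≤ h b)
    (hh : ContinuousWithinAt h (Iio b) b) : AntitoneOn g (Ioc a b) := by
  intro x hx y hy hxy
  rcases hy.2.lt_or_eq with hyb | rfl
  · exact hg ⟨hx.1, hxy.trans_lt hyb⟩ ⟨hy.1, hyb⟩ hxy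
  rcases hxy.lt_or_eq with hxy | rfl
  · refine hb.trans (le_of_tendsto hh ?_)
    filter_upwards [Ioo_mem_nhdsLT hxy] with t ht
    exact (hhg t ⟨hx.1.trans ht.1, ht.2⟩).trans (hg ⟨hx.1, hxy⟩ ⟨hx.1.trans ht.1, ht.2⟩ ht.1.le)
  · exact le_rfl

theorem extended_energy_density_antitone_general
    (ε : ℝ) (f : ℝ → ℝ)
    (hf : ContDiffOn ℝ 2 f (Ioo 0 1))
    (hcont : ContinuousOn f (Ioi 0))
    (hbound : ∀ r ∈ Ioo (0:ℝ) 1, 0 ≤ f r ∧ f r ≤ 1)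
    (hf' : ∀ r ∈ Ioo (0:ℝ) 1, 0 < deriv f r)
    (hf1 : f 1 = 1)
    (hext : ∀ r : ℝ, 1 < r → f r = 1)
    (hode : ∀ r ∈ Ioo (0:ℝ) 1,
      -(deriv (deriv f) r) - deriv f r / r + f r / r ^ 2
        = (1 / ε ^ 2) * f r * (1 - (f r) ^ 2)) :
    AntitoneOn (fun s => (1/2) * ((deriv f s) ^ 2 + (f s) ^ 2 / s ^ 2)
        + (1 / (4 * ε ^ 2)) * ((f s) ^ 2 - 1) ^ 2) (Ioi 0) := by
  have hone : EqOn f (fun _ => 1) (Ici 1) := by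
    rintro r (hr : 1 ≤ r)
    rcases hr.eq_or_lt with rfl | hr
    exacts [hf1, hext r hr]
  have hinner : AntitoneOn (energyDensity ε f) (Ioo 0 1) :=
    antitoneOn_energyDensity_of_ode le_rfl hf hbound (fun r hr => (hf' r hr).le) hode
  have hf_cont : ContinuousAt f 1 := hcont.continuousAt (Ioi_mem_nhds one_pos)
  have hleft : AntitoneOn (energyDensity ε f) (Ioc 0 1) := by
    refine hinner.Ioc_of_le_continuousWithinAt (fun x _ => half_sq_div_sq_le_energyDensity x)
      ?_ (ContinuousAt.continuousWithinAt (by fun_prop (disch := norm_num)))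
    rw [energyDensity_of_eqOn_one_Ici hone, hf1]
    norm_num
  have hright : AntitoneOn (energyDensity ε f) (Ici 1) :=
    antitoneOn_energyDensity_of_eqOn_one_Ici one_pos hone
  rw [← Ioc_union_Ici_eq_Ioi zero_lt_one]
  exact hleft.union_right hright (isGreatest_Ioc zero_lt_one) isLeast_Ici

theorem extended_energy_density_antitone
    (ε : ℝ) (hε : 0 < ε) (f : ℝ → ℝ)
    (hf : ContDiffOn ℝ 2 f (Ioo 0 1))
    (hcont : ContinuousOn f (Ioi 0))
    (hbound : ∀ r ∈ Ioo (0:ℝ) 1, 0 ≤ f r ∧ f r ≤ 1)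
    (hf' : ∀ r ∈ Ioo (0:ℝ) 1, 0 < deriv f r)
    (hf1 : f 1 = 1)
    (hext : ∀ r : ℝ, 1 < r → f r = 1)
    (hode : ∀ r ∈ Ioo (0:ℝ) 1,
      -(deriv (deriv f) r) - deriv f r / r + f r / r ^ 2
        = (1 / ε ^ 2) * f r * (1 - (f r) ^ 2)) :
    AntitoneOn (fun s => (1/2) * ((deriv f s) ^ 2 + (f s) ^ 2 / s ^ 2)
        + (1 / (4 * ε ^ 2)) * ((f s) ^ 2 - 1) ^ 2) (Ioi 0) :=
  extended_energy_density_antitone_general ε f hf hcont hbound hf' hf1 hext hode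
end

section
/- Existence of a center making moments vanish (Weinberger's topological argument): let Ω ⊂ ℝ² be a bounded measurable set of positive measure and let g : [0,∞) → [0,1] be continuous, nondecreasing, with g(0) = 0 and g(r) = 1 for r ≥ 1. Then there exists a point p ∈ ℝ² such that ∫_Ω g(|x − p|) (x − p)/|x − p| dx = 0 (both components of the vector integral vanish). -/
/-!
A variational argument replaces Brouwer's theorem. Let `G` be the primitive of `g` with
`G 0 = 0` and `Φ p = ∫_Ω G ‖x - p‖ dx`. Differentiating under the integral sign,
`∇Φ p = -∫_Ω g ‖x - p‖ (x - p) / ‖x - p‖ dx`: each `p ↦ G ‖x - p‖` is Lipschitz uniformly in `x`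
and differentiable at `p` unless `x = p`, a null set. Since `g ≥ 0` and `g = 1` on `[1, ∞)`,
`G r ≥ r - 1`, so `Φ` grows linearly at infinity and attains a global minimum, where its
gradient, the moment, vanishes.
-/

open Set MeasureTheory Filter Bornology
open scoped NNReal

theorem LipschitzOnWith.comp_norm_sub {E : Type*} [SeminormedAddCommGroup E] {G : ℝ → ℝ}
    {K : ℝ≥0} (hG : LipschitzOnWith K G (Ici 0)) (x : E) :
    LipschitzWith K (fun q => G ‖x - q‖) := by
  have hnorm : LipschitzWith 1 (fun q : E => ‖x - q‖) := by
    simpa only [← dist_eq_norm] using LipschitzWith.dist_right x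
  have := lipschitzOnWith_univ.mp (hG.comp hnorm.lipschitzOnWith fun q _ => norm_nonneg (x - q))
  rwa [mul_one] at this

theorem norm_div_norm_smul_self_le {E : Type*} [NormedAddCommGroup E] [NormedSpace ℝ E]
    (c : ℝ) (v : E) : ‖(c / ‖v‖) • v‖ ≤ ‖c‖ := by
  rcases eq_or_ne v 0 with rfl | hv
  · simp
  rw [norm_smul, norm_div, norm_norm, div_mul_cancel₀ _ (norm_ne_zero_iff.mpr hv)]

section Calculus

variable {E : Type*} [NormedAddCommGroup E] [InnerProductSpace ℝ E]

theorem hasFDerivAt_norm_sub_right {x p : E} (hxp : x ≠ p) :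
    HasFDerivAt (fun q => ‖x - q‖) (-innerSL ℝ (‖x - p‖⁻¹ • (x - p))) p := by
  have hsqrt := ((hasFDerivAt_id p).const_sub x).norm_sq.sqrt
    (by simpa [sub_eq_zero] using hxp)
  simp only [Real.sqrt_sq (norm_nonneg _), id] at hsqrt
  convert hsqrt using 1
  ext v
  have hnorm : ‖x - p‖ ≠ 0 := by simpa [sub_eq_zero] using hxp
  simp only [map_smul, map_sub, neg_apply, smul_apply, sub_apply, coe_innerSL_apply,
    smul_eq_mul, one_div, mul_inv_rev, ContinuousLinearMap.comp_neg, ContinuousLinearMap.comp_id,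
    neg_sub, nsmul_eq_mul, Nat.cast_ofNat]
  field_simp
  ring

theorem HasDerivAt.hasFDerivAt_comp_norm_sub {G : ℝ → ℝ} {G' : ℝ} {x p : E}
    (hG : HasDerivAt G G' ‖x - p‖) (hxp : x ≠ p) :
    HasFDerivAt (fun q => G ‖x - q‖) (-innerSL ℝ ((G' / ‖x - p‖) • (x - p))) p := by
  refine (hG.comp_hasFDerivAt p (hasFDerivAt_norm_sub_right hxp)).congr_fderiv ?_
  ext v
  simp [div_eq_mul_inv, mul_assoc]

end Calculus

section Primitive

variable {g : ℝ → ℝ}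

theorem Continuous.lipschitzOnWith_primitive (hgc : Continuous g) (a : ℝ) {s : Set ℝ} {K : ℝ≥0}
    (hs : Convex ℝ s) (hg : ∀ t ∈ s, ‖g t‖ ≤ K) :
    LipschitzOnWith K (fun r => ∫ t in a..r, g t) s :=
  hs.lipschitzOnWith_of_nnnorm_hasDerivWithin_le
    (fun r _ => (hgc.integral_hasStrictDerivAt a r).hasDerivAt.hasDerivWithinAt)
    (fun t ht => by exact_mod_cast hg t ht)

theorem sub_one_le_primitive (hgc : Continuous g) (hg0 : ∀ t ∈ Ici (0:ℝ), 0 ≤ g t)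
    (hg1 : ∀ t, 1 ≤ t → g t = 1) {r : ℝ} (hr : 0 ≤ r) : r - 1 ≤ ∫ t in (0:ℝ)..r, g t := by
  have hnonneg : ∀ s, 0 ≤ s → 0 ≤ ∫ t in (0:ℝ)..s, g t := fun s hs =>
    intervalIntegral.integral_nonneg hs fun t ht => hg0 t ht.1
  rcases le_or_gt r 1 with hr1 | hr1
  · linarith [hnonneg r hr]
  have htail : ∫ t in (1:ℝ)..r, g t = r - 1 := by
    rw [intervalIntegral.integral_congr (g := fun _ => (1:ℝ)) fun t ht => hg1 t ?_]
    · simp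
    · exact (uIcc_of_le hr1.le ▸ ht).1
  rw [← intervalIntegral.integral_add_adjacent_intervals (hgc.intervalIntegrable 0 1)
    (hgc.intervalIntegrable 1 r), htail]
  linarith [hnonneg 1 zero_le_one]

end Primitive

section Potential

variable {E : Type*} [NormedAddCommGroup E] [InnerProductSpace ℝ E] [FiniteDimensional ℝ E]
  [MeasurableSpace E] [BorelSpace E] {μ : Measure E} [IsFiniteMeasureOnCompacts μ]
  {g : ℝ → ℝ} {Ω : Set E}

noncomputable def radialPotential (g : ℝ → ℝ) (μ : Measure E) (Ω : Set E) (p : E) : ℝ :=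
  ∫ x in Ω, (∫ t in (0:ℝ)..‖x - p‖, g t) ∂μ

theorem integrableOn_primitive_norm_sub (hgc : Continuous g) (hΩ : IsBounded Ω) (p : E) :
    IntegrableOn (fun x => ∫ t in (0:ℝ)..‖x - p‖, g t) Ω μ := by
  obtain ⟨R, hR⟩ := hΩ.subset_closedBall 0
  have hcont : Continuous fun x : E => ∫ t in (0:ℝ)..‖x - p‖, g t :=
    (intervalIntegral.continuous_primitive (fun a b => hgc.intervalIntegrable a b) 0).comp
      (continuous_id.sub continuous_const).norm
  exact (hcont.continuousOn.integrableOn_compact (isCompact_closedBall 0 R)).mono_set hR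

theorem hasFDerivAt_radialPotential [NullSingletonClass μ] (hgc : Continuous g) {K : ℝ≥0}
    (hg : ∀ t ∈ Ici (0:ℝ), ‖g t‖ ≤ K) (hΩ : IsBounded Ω) (p : E) :
    HasFDerivAt (radialPotential g μ Ω)
      (-innerSL ℝ (∫ x in Ω, (g ‖x - p‖ / ‖x - p‖) • (x - p) ∂μ)) p := by
  have : IsFiniteMeasure (μ.restrict Ω) := isFiniteMeasure_restrict.mpr hΩ.measure_lt_top.ne
  have hgm := hgc.measurable
  have hw_meas : AEStronglyMeasurable (fun x => (g ‖x - p‖ / ‖x - p‖) • (x - p)) (μ.restrict Ω) :=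
    (by fun_prop : Measurable fun x : E => (g ‖x - p‖ / ‖x - p‖) • (x - p)).aestronglyMeasurable
  have hw_int : IntegrableOn (fun x => (g ‖x - p‖ / ‖x - p‖) • (x - p)) Ω μ :=
    Integrable.of_bound hw_meas K <| .of_forall fun x =>
      (norm_div_norm_smul_self_le _ _).trans (hg _ (norm_nonneg _))
  rw [← (innerSL ℝ).integral_comp_comm hw_int, ← integral_neg]
  refine (hasFDerivAt_integral_of_dominated_loc_of_lip (bound := fun _ => (K : ℝ)) univ_mem
    (.of_forall fun q => (integrableOn_primitive_norm_sub hgc hΩ q).aestronglyMeasurable)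
    (integrableOn_primitive_norm_sub hgc hΩ p)
    ((innerSL ℝ).continuous.comp_aestronglyMeasurable hw_meas).neg ?_ (integrable_const _) ?_).2
  · refine .of_forall fun x => ?_
    simpa using ((hgc.lipschitzOnWith_primitive 0 (convex_Ici 0) hg).comp_norm_sub x)
  · filter_upwards [(μ.restrict Ω).ae_ne p] with x hx
    exact (hgc.integral_hasStrictDerivAt 0 _).hasDerivAt.hasFDerivAt_comp_norm_sub hx

theorem tendsto_radialPotential_cocompact (hgc : Continuous g) (hg0 : ∀ t ∈ Ici (0:ℝ), 0 ≤ g t)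
    (hg1 : ∀ t, 1 ≤ t → g t = 1) (hΩ : IsBounded Ω) (hΩpos : 0 < μ Ω) :
    Tendsto (radialPotential g μ Ω) (cocompact E) atTop := by
  obtain ⟨R, hR⟩ := hΩ.subset_closedBall 0
  have : IsFiniteMeasure (μ.restrict Ω) := isFiniteMeasure_restrict.mpr hΩ.measure_lt_top.ne
  have hΩreal : 0 < μ.real Ω := ENNReal.toReal_pos hΩpos.ne' hΩ.measure_lt_top.ne
  have hlower (p : E) : (‖p‖ - (R + 1)) * μ.real Ω ≤ radialPotential g μ Ω p := by
    have hae : ∀ᵐ x ∂μ.restrict Ω, ‖p‖ - (R + 1) ≤ ∫ t in (0:ℝ)..‖x - p‖, g t := by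
      filter_upwards [ae_restrict_of_ae_restrict_of_subset hR
        (ae_restrict_mem measurableSet_closedBall)] with x hx
      have hxR : ‖x‖ ≤ R := mem_closedBall_zero_iff.mp hx
      have hpx : ‖p‖ - ‖x‖ ≤ ‖x - p‖ := norm_sub_rev p x ▸ norm_sub_norm_le p x
      linarith [sub_one_le_primitive hgc hg0 hg1 (norm_nonneg (x - p))]
    calc (‖p‖ - (R + 1)) * μ.real Ω = ∫ _ in Ω, (‖p‖ - (R + 1)) ∂μ := by simp [mul_comm]
      _ ≤ radialPotential g μ Ω p :=
        integral_mono_ae (integrable_const _) (integrableOn_primitive_norm_sub hgc hΩ p) hae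
  refine tendsto_atTop_mono hlower (Tendsto.atTop_mul_const hΩreal ?_)
  simpa only [sub_eq_add_neg] using tendsto_atTop_add_const_right _ _ tendsto_norm_cocompact_atTop

end Potential

theorem weinberger_center_general
    (Ω : Set (EuclideanSpace ℝ (Fin 2)))
    (hΩb : Bornology.IsBounded Ω) (hΩpos : 0 < volume Ω)
    (g : ℝ → ℝ) (hgc : Continuous g)
    (hg01 : ∀ r ∈ Ici (0:ℝ), 0 ≤ g r ∧ g r ≤ 1)
    (hg1 : ∀ r : ℝ, 1 ≤ r → g r = 1) :
    ∃ p : EuclideanSpace ℝ (Fin 2),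
      (∫ x in Ω, (g ‖x - p‖ / ‖x - p‖) • (x - p)) = 0 := by
  have hg0 (t) (ht : t ∈ Ici (0:ℝ)) : 0 ≤ g t := (hg01 t ht).1
  have hg_norm (t) (ht : t ∈ Ici (0:ℝ)) : ‖g t‖ ≤ (1 : ℝ≥0) := by
    simpa [abs_of_nonneg (hg0 t ht)] using (hg01 t ht).2
  have hΦ := hasFDerivAt_radialPotential (μ := volume) hgc hg_norm hΩb
  obtain ⟨p, hp⟩ := Differentiable.continuous (fun p => (hΦ p).differentiableAt)
    |>.exists_forall_le (tendsto_radialPotential_cocompact hgc hg0 hg1 hΩb hΩpos)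
  refine ⟨p, ?_⟩
  have hmin : IsLocalMin (radialPotential g volume Ω) p := Eventually.of_forall hp
  have hgrad := hmin.hasFDerivAt_eq_zero (hΦ p)
  rwa [neg_eq_zero, ← norm_eq_zero, innerSL_apply_norm, norm_eq_zero] at hgrad

theorem weinberger_center
    (Ω : Set (EuclideanSpace ℝ (Fin 2))) (hΩm : MeasurableSet Ω)
    (hΩb : Bornology.IsBounded Ω) (hΩpos : 0 < volume Ω)
    (g : ℝ → ℝ) (hgc : Continuous g) (hgm : MonotoneOn g (Ici 0))
    (hg01 : ∀ r ∈ Ici (0:ℝ), 0 ≤ g r ∧ g r ≤ 1)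
    (hg0 : g 0 = 0) (hg1 : ∀ r : ℝ, 1 ≤ r → g r = 1) :
    ∃ p : EuclideanSpace ℝ (Fin 2),
      (∫ x in Ω, (g ‖x - p‖ / ‖x - p‖) • (x - p)) = 0 :=
  weinberger_center_general Ω hΩb hΩpos g hgc hg01 hg1
end
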